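/- Assume the u_j are pairwise distinct. For n ≥ 1, let R_n = #{ 1 ≤ j ≤ n : u_j ≤ u_n } ∈ {1,…,n} be the rank of u_n among u_1, …, u_n. Then for every n ≥ 1, λ_{n+1} = (λ_n)_{S, R_n}, where S = ⊕ if s_n = +1 and S = ⊖ if s_n = −1. -/

import Mathlib

open MeasureTheory

/-- `I(x,y) = (min(x,y), max(x,y)]`. -/
def gapInterval (x y : ℝ) : Set ℝ := Set.Ioc (min x y) (max x y)

/-- `i(x,y) = inf { j ≥ 1 : u_j ∈ I(x,y) } ∈ ℕ ∪ {∞}` (with `inf ∅ = ∞`). -/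
noncomputable def firstIdx (u : ℕ → ℝ) (x y : ℝ) : ℕ∞ :=
  sInf ((fun j : ℕ => (j : ℕ∞)) '' {j : ℕ | 1 ≤ j ∧ u j ∈ gapInterval x y})

/-- `x ≺ y` iff `i(x,y) < ∞` and `(y − x) · s_{i(x,y)} > 0`. -/
def Prec (u s : ℕ → ℝ) (x y : ℝ) : Prop :=
  ∃ j : ℕ, firstIdx u x y = (j : ℕ∞) ∧ (y - x) * s j > 0

/-- The value at position `i` (0-indexed) of the inflation `τ_{b,k}` of a permutation `τ` of
`{0,…,n−1}` at position `k`, with sign `b` (`true` = ⊕, `false` = ⊖): writing `j = τ(k)`,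
every value larger than `j` is increased by `1` and the entry `j` is replaced by the two
consecutive entries `j, j+1` (if `b`) or `j+1, j` (if `¬b`). -/
def inflVal {n : ℕ} (τ : Equiv.Perm (Fin n)) (b : Bool) (k : Fin n) (i : Fin (n + 1)) : ℕ :=
  let j : ℕ := τ k
  if h1 : (i : ℕ) < (k : ℕ) then
    (if (τ ⟨i, lt_trans h1 k.isLt⟩ : ℕ) ≤ j then (τ ⟨i, lt_trans h1 k.isLt⟩ : ℕ)
     else (τ ⟨i, lt_trans h1 k.isLt⟩ : ℕ) + 1)
  else if (i : ℕ) = (k : ℕ) then (if b then j else j + 1)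
  else if (i : ℕ) = (k : ℕ) + 1 then (if b then j + 1 else j)
  else
    (if (τ ⟨(i : ℕ) - 1, by omega⟩ : ℕ) ≤ j then (τ ⟨(i : ℕ) - 1, by omega⟩ : ℕ)
     else (τ ⟨(i : ℕ) - 1, by omega⟩ : ℕ) + 1)

/-- `ρ = τ_{b,k}`, i.e. `ρ` is the inflation of `τ` at position `k` with sign `b`. -/
def IsInflation {n : ℕ} (τ : Equiv.Perm (Fin n)) (b : Bool) (k : Fin n)
    (ρ : Equiv.Perm (Fin (n + 1))) : Prop :=
  ∀ i : Fin (n + 1), (ρ i : ℕ) = inflVal τ b k i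

/-!
Write `E_{n+1} = E_n ∪ {u_n}` and let `v` be the predecessor of `u_n` in `E_n`; it sits at
position `R_n` (1-based) of `E_n` because `0` and the `u_j ≤ u_n`, `j < n`, lie below `u_n`.
No `u_j` with `j < n` lies in `(v, u_n]`, so `i(v, u_n) = n` and `v ≺ u_n` iff `s_n = +1`. Any
other `x ∈ E_n` is separated from `v` by some `u_j` with `j < n`, the same `u_j` comes first
between `x` and `u_n`, and `u_n` lies on the same side of `x` as `v`: so `x` compares with `u_n`
as with `v`. Hence `λ_{n+1}` is `λ_n` with the entry of `v` doubled into the adjacent pair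
`v, u_n`, which is the inflation at `R_n`.
-/

lemma Fin.predAbove_eq_self_iff {n : ℕ} (k : Fin n) {i : Fin (n + 1)} :
    k.predAbove i = k ↔ i = k.castSucc ∨ i = k.succ := by
  refine ⟨fun h => ?_, by rintro (rfl | rfl) <;> simp⟩
  rcases lt_trichotomy i k.castSucc with hi | rfl | hi
  · rw [Fin.predAbove_of_le_castSucc _ _ hi.le] at h
    exact absurd (h ▸ hi) (by simp)
  · exact .inl rfl
  · rw [Fin.predAbove_of_castSucc_lt _ _ hi] at h
    exact .inr (by rw [← h, Fin.succ_pred])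

lemma Fin.eq_castSucc_succ_of_predAbove_eq {n : ℕ} (k : Fin n) {i i' : Fin (n + 1)}
    (h : k.predAbove i = k.predAbove i') (hne : i ≠ i') :
    i = k.castSucc ∧ i' = k.succ ∨ i = k.succ ∧ i' = k.castSucc := by
  have hblock : k.predAbove i = k := by
    by_contra hk
    have hi : i ≠ k.succ := fun hi => hk (hi ▸ Fin.predAbove_succ_self k)
    have hi' : i' ≠ k.succ := fun hi' => hk (h.trans (hi' ▸ Fin.predAbove_succ_self k))
    exact hne (by rw [← Fin.succ_succAbove_predAbove hi, h, Fin.succ_succAbove_predAbove hi'])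
  rcases (Fin.predAbove_eq_self_iff k).1 hblock with rfl | rfl <;>
    rcases (Fin.predAbove_eq_self_iff k).1 (h ▸ hblock) with rfl | rfl <;> simp_all

lemma Fin.eq_of_lt_iff_lt {m : ℕ} {g : Fin m → Fin m} {ρ : Equiv.Perm (Fin m)}
    (h : ∀ i i', g i < g i' ↔ ρ i < ρ i') : g = ρ := by
  have hmono : StrictMono (g ∘ ρ.symm) := fun x y hxy => by
    simpa [h] using hxy
  have hid : g ∘ ρ.symm = id := by
    refine (hmono.range_inj strictMono_id).1 ?_
    rw [Set.range_id, Set.range_eq_univ]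
    exact Finite.surjective_of_injective hmono.injective
  funext i
  simpa using congrFun hid (ρ i)

lemma StrictMono.eq_comp_succAbove {α : Type*} [LinearOrder α] {m : ℕ} {e : Fin m → α}
    {e' : Fin (m + 1) → α} (he : StrictMono e) (he' : StrictMono e') (r : Fin (m + 1))
    (hrange : Set.range e' = insert (e' r) (Set.range e)) (hr : e' r ∉ Set.range e) :
    e = e' ∘ r.succAbove := by
  refine (he.range_inj (he'.comp (Fin.strictMono_succAbove r))).1 ?_
  rw [Set.range_comp, Fin.range_succAbove, Set.image_compl_eq_range_sdiff_image he'.injective,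
    Set.image_singleton, hrange, Set.insert_sdiff_self_of_notMem hr]

lemma StrictMono.apply_notMem_Ioc {α : Type*} [LinearOrder α] {m : ℕ} {e' : Fin (m + 1) → α}
    (he' : StrictMono e') (k : Fin m) (i : Fin m) :
    e' (k.succ.succAbove i) ∉ Set.Ioc (e' k.castSucc) (e' k.succ) := by
  rintro ⟨hlo, hhi⟩
  rw [he'.lt_iff_lt, Fin.castSucc_lt_iff_succ_le] at hlo
  exact Fin.succAbove_ne _ _ (le_antisymm (he'.le_iff_le.1 hhi) hlo)

section Inflation

variable {n : ℕ} (τ : Equiv.Perm (Fin n)) (b : Bool) (k : Fin n)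

lemma inflVal_castSucc :
    inflVal τ b k k.castSucc = if b then (τ k : ℕ) else (τ k : ℕ) + 1 := by
  simp [inflVal]

lemma inflVal_succ : inflVal τ b k k.succ = if b then (τ k : ℕ) + 1 else (τ k : ℕ) := by
  simp [inflVal]

lemma inflVal_of_predAbove_ne {i : Fin (n + 1)} (h : k.predAbove i ≠ k) :
    inflVal τ b k i = if (τ (k.predAbove i) : ℕ) ≤ τ k then (τ (k.predAbove i) : ℕ)
      else (τ (k.predAbove i) : ℕ) + 1 := by
  rw [Ne, Fin.predAbove_eq_self_iff, not_or, Fin.ext_iff, Fin.ext_iff] at h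
  rcases lt_or_gt_of_ne h.1 with hi | hi
  · rw [Fin.predAbove_of_le_castSucc _ _ hi.le]
    simp only [inflVal, dif_pos (show (i : ℕ) < k from hi)]
    rfl
  · simp only [Fin.val_castSucc, Fin.val_succ] at h hi
    rw [Fin.predAbove_of_castSucc_lt _ _ hi]
    simp only [inflVal, dif_neg (show ¬ (i : ℕ) < k by omega), if_neg h.1, if_neg h.2]
    rfl

lemma inflVal_lt_inflVal_iff {i i' : Fin (n + 1)} (h : k.predAbove i ≠ k.predAbove i') :
    inflVal τ b k i < inflVal τ b k i' ↔ τ (k.predAbove i) < τ (k.predAbove i') := by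
  have hτ : ∀ {a c : Fin n}, a ≠ c → (τ a : ℕ) ≠ τ c := fun hac hv =>
    hac (τ.injective (Fin.ext hv))
  have hblock : ∀ {i : Fin (n + 1)}, k.predAbove i = k →
      inflVal τ b k i = τ k ∨ inflVal τ b k i = τ k + 1 := by
    intro i hi
    rcases (Fin.predAbove_eq_self_iff k).1 hi with rfl | rfl
    · rw [inflVal_castSucc]; cases b <;> simp
    · rw [inflVal_succ]; cases b <;> simp
  rw [Fin.lt_def]
  by_cases hi : k.predAbove i = k
  · have hi' : k.predAbove i' ≠ k := fun hi' => h (hi.trans hi'.symm)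
    have := hτ hi'
    rw [inflVal_of_predAbove_ne τ b k hi', hi]
    rcases hblock hi with hv | hv <;> rw [hv] <;> split_ifs <;> omega
  · by_cases hi' : k.predAbove i' = k
    · have := hτ hi
      rw [inflVal_of_predAbove_ne τ b k hi, hi']
      rcases hblock hi' with hv | hv <;> rw [hv] <;> split_ifs <;> omega
    · have := hτ h
      rw [inflVal_of_predAbove_ne τ b k hi, inflVal_of_predAbove_ne τ b k hi']
      split_ifs <;> omega

lemma inflVal_lt {i : Fin (n + 1)} : inflVal τ b k i < n + 1 := by
  unfold inflVal
  split_ifs <;> grind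

end Inflation

lemma isInflation_of_lt_iff {n : ℕ} {τ : Equiv.Perm (Fin n)} {b : Bool} {k : Fin n}
    {ρ : Equiv.Perm (Fin (n + 1))}
    (hout : ∀ i i', k.predAbove i ≠ k.predAbove i' →
      (ρ i < ρ i' ↔ τ (k.predAbove i) < τ (k.predAbove i')))
    (hin : ρ k.castSucc < ρ k.succ ↔ b = true) :
    IsInflation τ b k ρ := by
  let g : Fin (n + 1) → Fin (n + 1) := fun i => ⟨inflVal τ b k i, inflVal_lt τ b k⟩
  have hg : ∀ i i', g i < g i' ↔ ρ i < ρ i' := by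
    intro i i'
    by_cases hq : k.predAbove i = k.predAbove i'
    · rcases eq_or_ne i i' with rfl | hne
      · simp
      have hρ : ρ k.castSucc ≠ ρ k.succ := ρ.injective.ne (Fin.castSucc_lt_succ).ne
      rcases Fin.eq_castSucc_succ_of_predAbove_eq k hq hne with ⟨rfl, rfl⟩ | ⟨rfl, rfl⟩ <;>
        cases b <;> simp [g, inflVal_castSucc, inflVal_succ] at hin ⊢ <;> grind
    · rw [hout i i' hq, Fin.lt_def]
      exact inflVal_lt_inflVal_iff τ b k hq
  intro i
  rw [← Fin.eq_of_lt_iff_lt hg]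

/-- `E'` is `E` with a point inserted right after `E k`, and `r` compares that point with the
others as it compares `E k`. -/
lemma isInflation_of_insert {n : ℕ} {α : Type*} {r : α → α → Prop}
    {τ : Equiv.Perm (Fin n)} {ρ : Equiv.Perm (Fin (n + 1))} {E : Fin n → α}
    {E' : Fin (n + 1) → α} {k : Fin n} {b : Bool}
    (hτ : ∀ i i', τ i < τ i' ↔ r (E i) (E i'))
    (hρ : ∀ i i', ρ i < ρ i' ↔ r (E' i) (E' i'))
    (hE : E = E' ∘ k.succ.succAbove)
    (hrep : ∀ i ≠ k, (r (E i) (E k) ↔ r (E i) (E' k.succ)) ∧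
      (r (E k) (E i) ↔ r (E' k.succ) (E i)))
    (hb : r (E k) (E' k.succ) ↔ b = true) :
    IsInflation τ b k ρ := by
  have hE' : ∀ i, i ≠ k.succ → E' i = E (k.predAbove i) := fun i hi => by
    rw [hE, Function.comp_apply, Fin.succ_succAbove_predAbove hi]
  refine isInflation_of_lt_iff (fun i i' hq => ?_) ?_
  · rw [hρ, hτ]
    rcases eq_or_ne i k.succ with rfl | hi <;> rcases eq_or_ne i' k.succ with rfl | hi'
    · exact absurd rfl hq
    · rw [Fin.predAbove_succ_self] at hq ⊢
      rw [hE' i' hi', ← (hrep _ (Ne.symm hq)).2]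
    · rw [Fin.predAbove_succ_self] at hq ⊢
      rw [hE' i hi, ← (hrep _ hq).1]
    · rw [hE' i hi, hE' i' hi']
  · rw [hρ, ← hb, hE, Function.comp_apply, Fin.succAbove_succ_self]

section Prec

variable {u s : ℕ → ℝ}

lemma gapInterval_comm (x y : ℝ) : gapInterval x y = gapInterval y x := by
  rw [gapInterval, gapInterval, min_comm, max_comm]

lemma gapInterval_of_le {x y : ℝ} (h : x ≤ y) : gapInterval x y = Set.Ioc x y := by
  rw [gapInterval, min_eq_left h, max_eq_right h]

lemma firstIdx_comm (x y : ℝ) : firstIdx u x y = firstIdx u y x := by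
  rw [firstIdx, firstIdx, gapInterval_comm]

lemma firstIdx_eq_of_minimal {x y : ℝ} {m : ℕ} (hm : 1 ≤ m) (hmem : u m ∈ gapInterval x y)
    (hmin : ∀ j, 1 ≤ j → u j ∈ gapInterval x y → m ≤ j) : firstIdx u x y = m := by
  refine le_antisymm (sInf_le ⟨m, ⟨hm, hmem⟩, rfl⟩) (le_sInf ?_)
  rintro _ ⟨j, ⟨hj, hju⟩, rfl⟩
  exact Nat.cast_le.2 (hmin j hj hju)

lemma firstIdx_eq_firstIdx {x y x' y' : ℝ} {N : ℕ}
    (hagree : ∀ j, 1 ≤ j → j < N → (u j ∈ gapInterval x y ↔ u j ∈ gapInterval x' y'))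
    (hsep : ∃ j, 1 ≤ j ∧ j < N ∧ u j ∈ gapInterval x y) :
    firstIdx u x y = firstIdx u x' y' := by
  classical
  have hex : ∃ j, 1 ≤ j ∧ u j ∈ gapInterval x y :=
    hsep.imp fun _ ⟨hj, _, hju⟩ => ⟨hj, hju⟩
  obtain ⟨hm, hmem⟩ := Nat.find_spec hex
  have hmN : Nat.find hex < N := by
    obtain ⟨j, hj, hjN, hju⟩ := hsep
    exact (Nat.find_min' hex ⟨hj, hju⟩).trans_lt hjN
  rw [firstIdx_eq_of_minimal hm hmem fun j hj hju => Nat.find_min' hex ⟨hj, hju⟩,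
    firstIdx_eq_of_minimal hm ((hagree _ hm hmN).1 hmem)]
  intro j hj hju
  by_contra! hjm
  exact Nat.find_min hex hjm ⟨hj, (hagree j hj (hjm.trans hmN)).2 hju⟩

lemma prec_iff_of_firstIdx_eq {x y : ℝ} {m : ℕ} (h : firstIdx u x y = m) :
    Prec u s x y ↔ 0 < (y - x) * s m := by
  refine ⟨?_, fun hm => ⟨m, h, hm⟩⟩
  rintro ⟨j, hj, hjs⟩
  rwa [Nat.cast_injective (h.symm.trans hj)]

lemma prec_congr {x y x' y' : ℝ} (hidx : firstIdx u x y = firstIdx u x' y')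
    (hsgn : SignType.sign (y - x) = SignType.sign (y' - x')) :
    Prec u s x y ↔ Prec u s x' y' := by
  simp only [Prec, hidx, gt_iff_lt, ← sign_eq_one_iff, sign_mul, hsgn]

end Prec

/-- The paper's `E_n` is `pointsUpTo u (n - 1)`. -/
def pointsUpTo (u : ℕ → ℝ) (m : ℕ) : Set ℝ :=
  insert 0 {x | ∃ j, 1 ≤ j ∧ j ≤ m ∧ u j = x}

section PointsUpTo

variable {u s : ℕ → ℝ}

lemma nonneg_of_mem_pointsUpTo (hu : ∀ j, 1 ≤ j → 0 < u j) {m : ℕ} {x : ℝ}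
    (hx : x ∈ pointsUpTo u m) : 0 ≤ x := by
  rcases hx with rfl | ⟨j, hj, -, rfl⟩
  exacts [le_rfl, (hu j hj).le]

lemma exists_mem_gapInterval (hu : ∀ j, 1 ≤ j → 0 < u j) {m : ℕ} {x y : ℝ}
    (hx : x ∈ pointsUpTo u m) (hy : y ∈ pointsUpTo u m) (hxy : x ≠ y) :
    ∃ j, 1 ≤ j ∧ j ≤ m ∧ u j ∈ gapInterval x y := by
  wlog hlt : x < y generalizing x y
  · rw [gapInterval_comm]
    exact this hy hx hxy.symm (lt_of_le_of_ne (not_lt.1 hlt) hxy.symm)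
  rcases hy with rfl | ⟨j, hj, hjm, rfl⟩
  · exact absurd hlt (not_lt.2 (nonneg_of_mem_pointsUpTo hu hx))
  · refine ⟨j, hj, hjm, ?_⟩
    rw [gapInterval_of_le hlt.le]
    exact ⟨hlt, le_rfl⟩

lemma pointsUpTo_succ (m : ℕ) :
    pointsUpTo u (m + 1) = insert (u (m + 1)) (pointsUpTo u m) := by
  ext x
  simp only [pointsUpTo, Set.mem_insert_iff, Set.mem_ofPred_eq]
  constructor
  · rintro (h | ⟨j, hj, hjm, rfl⟩)
    · exact .inr (.inl h)
    · rcases (Nat.le_succ_iff.1 hjm) with hjm | rfl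
      exacts [.inr (.inr ⟨j, hj, hjm, rfl⟩), .inl rfl]
  · rintro (rfl | h | ⟨j, hj, hjm, rfl⟩)
    exacts [.inr ⟨m + 1, by omega, le_rfl, rfl⟩, .inl h, .inr ⟨j, hj, by omega, rfl⟩]

lemma notMem_pointsUpTo (hu : ∀ j, 1 ≤ j → 0 < u j)
    (hdist : ∀ j k, 1 ≤ j → 1 ≤ k → u j = u k → j = k) {m : ℕ} :
    u (m + 1) ∉ pointsUpTo u m := by
  rintro (h | ⟨j, hj, hjm, h⟩)
  · exact (hu _ (by omega)).ne' h
  · exact absurd (hdist _ _ hj (by omega) h) (by omega)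

lemma firstIdx_eq_of_gap {m : ℕ} {v : ℝ} (hv : v < u (m + 1))
    (hgap : ∀ y ∈ pointsUpTo u m, y ∉ Set.Ioc v (u (m + 1))) :
    firstIdx u v (u (m + 1)) = (m + 1 : ℕ) := by
  refine firstIdx_eq_of_minimal (by omega) ?_ fun j hj hju => ?_
  · rw [gapInterval_of_le hv.le]
    exact ⟨hv, le_rfl⟩
  · rw [gapInterval_of_le hv.le] at hju
    by_contra! hjm
    exact hgap (u j) (.inr ⟨j, hj, by omega, rfl⟩) hju

/-- `x` and `v` are separated by some `u_j` with `j ≤ m`, no such `u_j` lies in `(v, w]`, and `w`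
is on the same side of `x` as `v`. -/
lemma prec_iff_prec_of_gap (hu : ∀ j, 1 ≤ j → 0 < u j) {m : ℕ} {v w x : ℝ} (hvw : v < w)
    (hgap : ∀ y ∈ pointsUpTo u m, y ∉ Set.Ioc v w) (hv : v ∈ pointsUpTo u m)
    (hx : x ∈ pointsUpTo u m) (hxv : x ≠ v) :
    (Prec u s x v ↔ Prec u s x w) ∧ (Prec u s v x ↔ Prec u s w x) := by
  have hside : x < v ∨ w < x := by
    refine (lt_or_gt_of_ne hxv).imp_right fun hvx => ?_
    exact not_le.1 fun hxw => hgap x hx ⟨hvx, hxw⟩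
  have hidx : firstIdx u x v = firstIdx u x w := by
    refine firstIdx_eq_firstIdx (N := m + 1) (fun j hj hjm => ?_) ?_
    · have := hgap (u j) (.inr ⟨j, hj, by omega, rfl⟩)
      simp only [gapInterval, Set.mem_Ioc] at this ⊢
      rcases hside with h | h <;> grind
    · obtain ⟨j, hj, hjm, hju⟩ := exists_mem_gapInterval hu hx hv hxv
      exact ⟨j, hj, by omega, hju⟩
  have hsgn : SignType.sign (v - x) = SignType.sign (w - x) ∧
      SignType.sign (x - v) = SignType.sign (x - w) := by
    rcases hside with hx | hx
    · simp [sign_pos, sign_neg, sub_pos.2 hx, sub_pos.2 (hx.trans hvw), sub_neg.2 hx,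
        sub_neg.2 (hx.trans hvw)]
    · simp [sign_pos, sign_neg, sub_pos.2 hx, sub_pos.2 (hvw.trans hx), sub_neg.2 hx,
        sub_neg.2 (hvw.trans hx)]
  exact ⟨prec_congr hidx hsgn.1,
    prec_congr (by rw [firstIdx_comm, hidx, firstIdx_comm]) hsgn.2⟩

lemma index_eq_rank (hu : ∀ j, 1 ≤ j → 0 < u j)
    (hdist : ∀ j k, 1 ≤ j → 1 ≤ k → u j = u k → j = k) {n : ℕ} (hn : 1 ≤ n)
    {e : Fin (n + 1) → ℝ} (he : StrictMono e)
    (hrange : Set.range e = pointsUpTo u n)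
    {r : Fin (n + 1)} (hr : e r = u n) :
    (r : ℕ) = ((Finset.Icc 1 n).filter (fun j => u j ≤ u n)).card := by
  classical
  have hIic : Finset.univ.filter (fun i => e i ≤ u n) = Finset.Iic r := by
    ext i; simp [← hr, he.le_iff_le]
  have himage : (Finset.univ.filter (fun i => e i ≤ u n)).image e =
      insert 0 (((Finset.Icc 1 n).filter (fun j => u j ≤ u n)).image u) := by
    ext x
    simp only [Finset.mem_image, Finset.mem_filter, Finset.mem_univ, true_and,
      Finset.mem_insert, Finset.mem_Icc]
    constructor
    · rintro ⟨i, hi, rfl⟩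
      rcases hrange ▸ Set.mem_range_self i with h0 | ⟨j, hj, hjn, hju⟩
      · exact .inl h0
      · exact .inr ⟨j, ⟨⟨hj, hjn⟩, hju ▸ hi⟩, hju⟩
    · rintro (rfl | ⟨j, ⟨⟨hj, hjn⟩, hjle⟩, rfl⟩)
      · obtain ⟨i, hi⟩ : (0 : ℝ) ∈ Set.range e := hrange ▸ .inl rfl
        exact ⟨i, hi ▸ (hu n hn).le, hi⟩
      · obtain ⟨i, hi⟩ : u j ∈ Set.range e := hrange ▸ .inr ⟨j, hj, hjn, rfl⟩
        exact ⟨i, hi ▸ hjle, hi⟩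
  have h0 : (0 : ℝ) ∉ ((Finset.Icc 1 n).filter (fun j => u j ≤ u n)).image u := by
    simp only [Finset.mem_image, Finset.mem_filter, Finset.mem_Icc, not_exists, not_and]
    exact fun j hj => (hu j hj.1.1).ne'
  have hcard := congrArg Finset.card himage
  rw [Finset.card_image_of_injective _ he.injective, hIic, Fin.card_Iic,
    Finset.card_insert_of_notMem h0, Finset.card_image_of_injOn] at hcard
  · omega
  · intro j hj k hk
    simp only [Finset.coe_filter, Finset.mem_Icc, Set.mem_ofPred_eq] at hj hk
    exact hdist j k hj.1.1 hk.1.1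

end PointsUpTo

theorem perm_recursion_inflation_general
    (u s : ℕ → ℝ)
    (hu : ∀ j, 1 ≤ j → u j ∈ Set.Ioo (0:ℝ) 1)
    (hdist : ∀ j k, 1 ≤ j → 1 ≤ k → u j = u k → j = k)
    (lam : (n : ℕ) → Equiv.Perm (Fin n)) (e : (n : ℕ) → Fin n → ℝ)
    (he1 : ∀ n, 1 ≤ n → StrictMono (e n))
    (he2 : ∀ n, 1 ≤ n → Set.range (e n) =
      insert (0:ℝ) {x : ℝ | ∃ j, 1 ≤ j ∧ j ≤ n - 1 ∧ u j = x})
    (hlam : ∀ n, 1 ≤ n → ∀ j k : Fin n,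
      (lam n j < lam n k ↔ Prec u s (e n j) (e n k))) :
    ∀ n, 1 ≤ n →
      ∀ hR : ((Finset.Icc 1 n).filter (fun j => u j ≤ u n)).card - 1 < n,
        (s n = 1 → IsInflation (lam n) true
          ⟨((Finset.Icc 1 n).filter (fun j => u j ≤ u n)).card - 1, hR⟩ (lam (n + 1))) ∧
        (s n = -1 → IsInflation (lam n) false
          ⟨((Finset.Icc 1 n).filter (fun j => u j ≤ u n)).card - 1, hR⟩ (lam (n + 1))) := by
  intro n hn hR
  obtain ⟨m, rfl⟩ : ∃ m, n = m + 1 := ⟨n - 1, by omega⟩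
  have hu0 : ∀ j, 1 ≤ j → 0 < u j := fun j hj => (hu j hj).1
  have he : ∀ m, StrictMono (e (m + 1)) := fun m => he1 (m + 1) (by omega)
  have hrange : ∀ m, Set.range (e (m + 1)) = pointsUpTo u m := fun m => he2 (m + 1) (by omega)
  set k : Fin (m + 1) := ⟨_, hR⟩
  obtain ⟨r, hr⟩ : u (m + 1) ∈ Set.range (e (m + 2)) := by
    rw [hrange, pointsUpTo_succ]; exact .inl rfl
  obtain rfl : r = k.succ := by
    have hpos : 0 < ((Finset.Icc 1 (m + 1)).filter (fun j => u j ≤ u (m + 1))).card :=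
      Finset.card_pos.2 ⟨m + 1, by simp⟩
    refine Fin.ext ?_
    rw [Fin.val_succ, index_eq_rank hu0 hdist (by omega) (he _) (hrange _) hr]
    exact (Nat.sub_add_cancel hpos).symm
  have hE : e (m + 1) = e (m + 2) ∘ k.succ.succAbove := (he m).eq_comp_succAbove (he _) _
    (by rw [hr, hrange, hrange, pointsUpTo_succ]) (hr ▸ hrange m ▸ notMem_pointsUpTo hu0 hdist)
  have hv : e (m + 1) k = e (m + 2) k.castSucc := by
    rw [hE, Function.comp_apply, Fin.succAbove_succ_self]
  have hvw : e (m + 1) k < u (m + 1) := hv ▸ hr ▸ he _ Fin.castSucc_lt_succ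
  have hgap : ∀ y ∈ pointsUpTo u m, y ∉ Set.Ioc (e (m + 1) k) (u (m + 1)) := by
    rw [← hrange, hv, ← hr, hE]
    rintro _ ⟨i, rfl⟩
    exact (he _).apply_notMem_Ioc k i
  have hprec : Prec u s (e (m + 1) k) (u (m + 1)) ↔ 0 < s (m + 1) := by
    rw [prec_iff_of_firstIdx_eq (firstIdx_eq_of_gap hvw hgap),
      mul_pos_iff_of_pos_left (sub_pos.2 hvw)]
  have key : ∀ b, (0 < s (m + 1) ↔ b = true) → IsInflation (lam (m + 1)) b k (lam (m + 2)) :=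
    fun b hb => isInflation_of_insert (hlam _ (by omega)) (hlam _ (by omega)) hE
      (fun i hi => hr ▸ prec_iff_prec_of_gap hu0 hvw hgap (hrange m ▸ Set.mem_range_self k)
        (hrange m ▸ Set.mem_range_self i) ((he m).injective.ne hi))
      (by rw [hr, hprec, hb])
  exact ⟨fun hs1 => key true (by simp [hs1]), fun hs1 => key false (by simp [hs1])⟩

/-- assume the `u_j` pairwise distinct, and let `λ_n = Perm(E_n, <, ≺)` where
`E_n = {0, u_1, …, u_{n−1}}` (here `lam n : Equiv.Perm (Fin n)` is 0-indexed and `e n` is the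
increasing enumeration of `E_n`). Let `R_n` be the rank of `u_n` among `u_1, …, u_n`. Then
`λ_{n+1} = (λ_n)_{S, R_n}` where `S = ⊕` if `s_n = +1` and `S = ⊖` if `s_n = −1`. -/
theorem perm_recursion_inflation
    (u s : ℕ → ℝ)
    (hu : ∀ j, 1 ≤ j → u j ∈ Set.Ioo (0:ℝ) 1)
    (hs : ∀ j, 1 ≤ j → s j = 1 ∨ s j = -1)
    (hdist : ∀ j k, 1 ≤ j → 1 ≤ k → u j = u k → j = k)
    (lam : (n : ℕ) → Equiv.Perm (Fin n)) (e : (n : ℕ) → Fin n → ℝ)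
    (he1 : ∀ n, 1 ≤ n → StrictMono (e n))
    (he2 : ∀ n, 1 ≤ n → Set.range (e n) =
      insert (0:ℝ) {x : ℝ | ∃ j, 1 ≤ j ∧ j ≤ n - 1 ∧ u j = x})
    (hlam : ∀ n, 1 ≤ n → ∀ j k : Fin n,
      (lam n j < lam n k ↔ Prec u s (e n j) (e n k))) :
    ∀ n, 1 ≤ n →
      ∀ hR : ((Finset.Icc 1 n).filter (fun j => u j ≤ u n)).card - 1 < n,
        (s n = 1 → IsInflation (lam n) true
          ⟨((Finset.Icc 1 n).filter (fun j => u j ≤ u n)).card - 1, hR⟩ (lam (n + 1))) ∧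
        (s n = -1 → IsInflation (lam n) false
          ⟨((Finset.Icc 1 n).filter (fun j => u j ≤ u n)).card - 1, hR⟩ (lam (n + 1))) :=
  perm_recursion_inflation_general u s hu hdist lam e he1 he2 hlam
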